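/- Let $m,p>0$ with $mp>1$, $0<\beta<1$, $b>0$, $C>0$, and $\alpha>(1+p)/(mp-\beta)$. Define, for $\epsilon\in(0,1)$, $g_{\epsilon}(x,t)=\big[(C+\epsilon)^{1-\beta}(-x)_+^{\alpha(1-\beta)} - b(1-\beta)(1-\epsilon)t\big]_+^{1/(1-\beta)}$ and $\eta_{\ell}(t)=-\ell t^{1/(\alpha(1-\beta))}$ with $\ell(\epsilon)=(C+\epsilon)^{-1/\alpha}[b(1-\beta)(1-\epsilon)]^{1/(\alpha(1-\beta))}$. Then on the region $\{(x,t): x<\eta_{\ell(\epsilon)}(t), t>0\}$ where $g_{\epsilon}>0$, one has the identity $L g_\epsilon = b g_\epsilon^{\beta}(\epsilon + S)$ where $S = -b^{-1}(\alpha m)^p (C+\epsilon)^{mp-\beta}(-x)^{\alpha(mp-\beta)-(1+p)}\Big[\tfrac{g_\epsilon(-x)^{-\alpha}}{C+\epsilon}\Big]^{p(m+\beta)-(1+p)}\Big\{\alpha p(m+\beta-1) + p(\alpha(1-\beta)-1)\Big[\tfrac{g_\epsilon(-x)^{-\alpha}}{C+\epsilon}\Big]^{1-\beta}\Big\}$,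 with $Lg = g_t - (|(g^m)_x|^{p-1}(g^m)_x)_x + bg^{\beta}$. Moreover $S\to 0$ as $x\to 0^-$ uniformly on the region (since $\alpha(mp-\beta)-(1+p)>0$), provided $p(m+\beta)\ge 1+p$. -/

import Mathlib

open Real

/-- positive part -/
noncomputable def pp (s : ℝ) : ℝ := max s 0

open Filter Topology

/-!
On the region `x < η_ℓ(t)` neither positive part is active, so `g_ε = u ^ (1/(1-β))` with
`u = (C+ε)^(1-β) (-x)^(α(1-β)) - b(1-β)(1-ε) t > 0`; the choice of `ℓ` is exactly what makes
`u > 0` there. Then `g_t = -b(1-ε) g^β`, which produces the `ε` term, and the flux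
`|(g^m)_x|^(p-1) (g^m)_x` is minus a product of powers of `u` and `-x`. Differentiating it gives
two monomials in `C+ε`, `-x` and `u`, which match the two terms of `b g^β S`; each match is an
identity between positive monomials, checked on logarithms. Finally `X = g (-x)^(-α)/(C+ε)`
lies in `[0,1]`, so `|S| ≤ K (-x)^(α(mp-β)-(1+p))`, which tends to `0` because the exponent is
positive.
-/

lemma pp_of_nonneg {s : ℝ} (hs : 0 ≤ s) : pp s = s := max_eq_left hs

lemma abs_rpow_sub_one_mul_of_neg {D : ℝ} (hD : D < 0) (p : ℝ) :
    |D| ^ (p - 1) * D = -(-D) ^ p := by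
  rw [abs_of_neg hD, rpow_sub_one (neg_ne_zero.2 hD.ne)]
  field_simp [hD.ne]

lemma hasDerivAt_neg_rpow {x : ℝ} (hx : x < 0) (s : ℝ) :
    HasDerivAt (fun z => (-z) ^ s) (-(s * (-x) ^ (s - 1))) x := by
  have h := (hasDerivAt_rpow_const (p := s) (Or.inl (neg_ne_zero.2 hx.ne))).comp x
    (hasDerivAt_neg x)
  simpa [Function.comp_def] using h

section Barrier

variable {c s k l γ x t : ℝ}

lemma base_pos_of_lt_interface (hc : 0 < c) (hs : 0 < s) (hl : 0 ≤ l) (hls : l ^ s = k / c)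
    (ht : 0 < t) (hx : x < -l * t ^ (1 / s)) : x < 0 ∧ 0 < c * (-x) ^ s - k * t := by
  have hη : 0 ≤ l * t ^ (1 / s) := by positivity
  have hpow : (l * t ^ (1 / s)) ^ s = k * t / c := by
    rw [mul_rpow hl (by positivity), ← rpow_mul ht.le, one_div_mul_cancel hs.ne', rpow_one, hls]
    ring
  have hlt := rpow_lt_rpow hη (by linarith : l * t ^ (1 / s) < -x) hs
  rw [hpow, div_lt_iff₀ hc] at hlt
  exact ⟨by linarith, by linarith⟩

lemma eventually_base_pos (hx : x < 0) (hu : 0 < c * (-x) ^ s - k * t) :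
    ∀ᶠ q : ℝ × ℝ in 𝓝 (x, t), q.1 < 0 ∧ 0 < c * (-q.1) ^ s - k * q.2 := by
  have hcont : ContinuousAt (fun q : ℝ × ℝ => c * (-q.1) ^ s - k * q.2) (x, t) := by
    fun_prop (disch := exact Or.inl (neg_ne_zero.2 hx.ne))
  exact (continuousAt_fst.eventually (eventually_lt_nhds hx)).and
    (hcont.eventually (eventually_gt_nhds hu))

lemma eventually_barrier_eq (hx : x < 0) (hu : 0 < c * (-x) ^ s - k * t) :
    ∀ᶠ q : ℝ × ℝ in 𝓝 (x, t),
      pp (c * pp (-q.1) ^ s - k * q.2) ^ γ = (c * (-q.1) ^ s - k * q.2) ^ γ := by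
  filter_upwards [eventually_base_pos hx hu] with q ⟨hq, hqu⟩
  rw [pp_of_nonneg (neg_nonneg.2 hq.le), pp_of_nonneg hqu.le]

lemma barrier_eq (hx : x < 0) (hu : 0 < c * (-x) ^ s - k * t) :
    pp (c * pp (-x) ^ s - k * t) ^ γ = (c * (-x) ^ s - k * t) ^ γ :=
  (eventually_barrier_eq hx hu).self_of_nhds

lemma hasDerivAt_barrier_time (hx : x < 0) (hu : 0 < c * (-x) ^ s - k * t) :
    HasDerivAt (fun τ => pp (c * pp (-x) ^ s - k * τ) ^ γ)
      (-k * γ * (c * (-x) ^ s - k * t) ^ (γ - 1)) t := by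
  have hlin : HasDerivAt (fun τ => c * (-x) ^ s - k * τ) (-k) t := by
    simpa using ((hasDerivAt_id t).const_mul k).const_sub (c * (-x) ^ s)
  exact (hlin.rpow_const (Or.inl hu.ne')).congr_of_eventuallyEq
    (((Continuous.prodMk_right x).tendsto t).eventually (eventually_barrier_eq hx hu))

lemma hasDerivAt_base_rpow (a : ℝ) (hx : x < 0) (hu : 0 < c * (-x) ^ s - k * t) :
    HasDerivAt (fun z => (c * (-z) ^ s - k * t) ^ a)
      (-(c * s * (-x) ^ (s - 1)) * a * (c * (-x) ^ s - k * t) ^ (a - 1)) x := by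
  have hbase := ((hasDerivAt_neg_rpow hx s).const_mul c).sub_const (k * t)
  exact (hbase.rpow_const (Or.inl hu.ne')).congr_deriv (by ring)

lemma deriv_barrier_rpow (a : ℝ) (hx : x < 0) (hu : 0 < c * (-x) ^ s - k * t) :
    deriv (fun z => (pp (c * pp (-z) ^ s - k * t) ^ γ) ^ a) x =
      -(c * s * (-x) ^ (s - 1)) * (γ * a) * (c * (-x) ^ s - k * t) ^ (γ * a - 1) := by
  refine ((hasDerivAt_base_rpow (γ * a) hx hu).congr_of_eventuallyEq ?_).deriv
  have hslice := (Continuous.prodMk_left t).tendsto x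
  filter_upwards [hslice.eventually (eventually_barrier_eq (γ := γ) hx hu),
    hslice.eventually (eventually_base_pos hx hu)] with z hz hzu
  rw [hz, ← rpow_mul hzu.2.le]

lemma flux_eventuallyEq {m : ℝ} (p : ℝ) (hc : 0 < c) (hs : 0 < s) (hγm : 0 < γ * m)
    (hx : x < 0) (hu : 0 < c * (-x) ^ s - k * t) :
    (fun y => |deriv (fun z => (pp (c * pp (-z) ^ s - k * t) ^ γ) ^ m) y| ^ (p - 1) *
        deriv (fun z => (pp (c * pp (-z) ^ s - k * t) ^ γ) ^ m) y) =ᶠ[𝓝 x]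
      fun y => -((c * s * (γ * m)) ^ p *
        ((c * (-y) ^ s - k * t) ^ ((γ * m - 1) * p) * (-y) ^ ((s - 1) * p))) := by
  filter_upwards [((Continuous.prodMk_left t).tendsto x).eventually (eventually_base_pos hx hu)]
    with y ⟨hy, hyu⟩
  have hy' : 0 < -y := neg_pos.2 hy
  have hP : 0 < c * s * (γ * m) * ((c * (-y) ^ s - k * t) ^ (γ * m - 1) * (-y) ^ (s - 1)) := by
    positivity
  rw [deriv_barrier_rpow m hy hyu,
    show -(c * s * (-y) ^ (s - 1)) * (γ * m) * (c * (-y) ^ s - k * t) ^ (γ * m - 1) =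
      -(c * s * (γ * m) * ((c * (-y) ^ s - k * t) ^ (γ * m - 1) * (-y) ^ (s - 1))) by ring,
    abs_rpow_sub_one_mul_of_neg (neg_neg_of_pos hP), neg_neg,
    mul_rpow (by positivity : 0 ≤ c * s * (γ * m)) (by positivity),
    mul_rpow (rpow_nonneg hyu.le _) (rpow_nonneg hy'.le _), ← rpow_mul hyu.le,
    ← rpow_mul hy'.le]

lemma deriv_flux {m : ℝ} (p : ℝ) (hc : 0 < c) (hs : 0 < s) (hγm : 0 < γ * m) (hx : x < 0)
    (hu : 0 < c * (-x) ^ s - k * t) :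
    deriv (fun y => |deriv (fun z => (pp (c * pp (-z) ^ s - k * t) ^ γ) ^ m) y| ^ (p - 1) *
        deriv (fun z => (pp (c * pp (-z) ^ s - k * t) ^ γ) ^ m) y) x =
      -((c * s * (γ * m)) ^ p *
        (-(c * s * (-x) ^ (s - 1)) * ((γ * m - 1) * p) *
            (c * (-x) ^ s - k * t) ^ ((γ * m - 1) * p - 1) * (-x) ^ ((s - 1) * p) +
          (c * (-x) ^ s - k * t) ^ ((γ * m - 1) * p) *
            -((s - 1) * p * (-x) ^ ((s - 1) * p - 1)))) := by
  rw [(flux_eventuallyEq p hc hs hγm hx hu).deriv_eq]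
  exact (((hasDerivAt_base_rpow _ hx hu).mul (hasDerivAt_neg_rpow hx _)).const_mul _).neg.deriv

end Barrier

lemma interface_coeff_rpow {α β A k : ℝ} (hα : 0 < α) (hβ : β < 1) (hA : 0 < A)
    (hk : 0 < k) :
    (A ^ (-(1 / α)) * k ^ (1 / (α * (1 - β)))) ^ (α * (1 - β)) = k / A ^ (1 - β) := by
  have h1β : 1 - β ≠ 0 := sub_ne_zero.2 hβ.ne'
  apply log_injOn_pos (Set.mem_Ioi.2 (by positivity)) (Set.mem_Ioi.2 (by positivity))
  simp (disch := positivity) only [log_mul, log_rpow, log_div]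
  field_simp
  ring

lemma time_residual {β b ε k γ u : ℝ} (hβ : β < 1) (hu : 0 < u)
    (hk : k = b * (1 - β) * (1 - ε)) (hγ : γ = 1 / (1 - β)) :
    -k * γ * u ^ (γ - 1) + b * (u ^ γ) ^ β = b * (u ^ γ) ^ β * ε := by
  subst hk hγ
  have h1β : 1 - β ≠ 0 := sub_ne_zero.2 hβ.ne'
  rw [← rpow_mul hu.le, show 1 / (1 - β) - 1 = 1 / (1 - β) * β by field_simp; ring]
  field_simp
  ring

lemma flux_residual {α β m p b A c s γ r u : ℝ} (hβ : β < 1) (hα : 0 < α) (hm : 0 < m)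
    (hb : b ≠ 0) (hA : 0 < A) (hr : 0 < r) (hu : 0 < u) (hc : c = A ^ (1 - β))
    (hs : s = α * (1 - β)) (hγ : γ = 1 / (1 - β)) :
    (c * s * (γ * m)) ^ p *
        (-(c * s * r ^ (s - 1)) * ((γ * m - 1) * p) * u ^ ((γ * m - 1) * p - 1) *
            r ^ ((s - 1) * p) +
          u ^ ((γ * m - 1) * p) * -((s - 1) * p * r ^ ((s - 1) * p - 1))) =
      b * (u ^ γ) ^ β *
        (-b⁻¹ * (α * m) ^ p * A ^ (m * p - β) * r ^ (α * (m * p - β) - (1 + p)) *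
          (u ^ γ * r ^ (-α) / A) ^ (p * (m + β) - (1 + p)) *
          (α * p * (m + β - 1) +
            p * (α * (1 - β) - 1) * (u ^ γ * r ^ (-α) / A) ^ (1 - β))) := by
  subst hc hs hγ
  have h1β : 1 - β ≠ 0 := sub_ne_zero.2 hβ.ne'
  rw [show A ^ (1 - β) * (α * (1 - β)) * (1 / (1 - β) * m) = α * m * A ^ (1 - β) by
    field_simp]
  set X := u ^ (1 / (1 - β)) * r ^ (-α) / A with hX
  set K := (α * m * A ^ (1 - β)) ^ p
  set M := (α * m) ^ p * A ^ (m * p - β) * r ^ (α * (m * p - β) - (1 + p)) *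
    X ^ (p * (m + β) - (1 + p)) * (u ^ (1 / (1 - β))) ^ β
  have hM1 : K * A ^ (1 - β) * r ^ (α * (1 - β) - 1) * u ^ ((1 / (1 - β) * m - 1) * p - 1) *
      r ^ ((α * (1 - β) - 1) * p) = M := by
    apply log_injOn_pos (Set.mem_Ioi.2 (by positivity)) (Set.mem_Ioi.2 (by positivity))
    simp (disch := positivity) only [K, M, hX, log_mul, log_rpow, log_div]
    field_simp
    ring
  have hM2 : K * u ^ ((1 / (1 - β) * m - 1) * p) * r ^ ((α * (1 - β) - 1) * p - 1) =
      M * X ^ (1 - β) := by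
    apply log_injOn_pos (Set.mem_Ioi.2 (by positivity)) (Set.mem_Ioi.2 (by positivity))
    simp (disch := positivity) only [K, M, hX, log_mul, log_rpow, log_div]
    field_simp
    ring
  have hbb : b * b⁻¹ = 1 := mul_inv_cancel₀ hb
  -- the first monomial carries `α(1-β) (m/(1-β) - 1) p`, which is `α p (m+β-1)`
  have hγ1 : (1 - β) * (1 / (1 - β)) = 1 := mul_one_div_cancel h1β
  linear_combination (-(α * (1 - β)) * ((1 / (1 - β) * m - 1) * p)) * hM1
    - (α * (1 - β) - 1) * p * hM2
    + M * (α * p * (m + β - 1) + p * (α * (1 - β) - 1) * X ^ (1 - β)) * hbb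
    - α * p * m * M * hγ1

lemma barrier_ratio_mem_Icc {α β A r u : ℝ} (hβ : β < 1) (hA : 0 < A) (hr : 0 < r)
    (hu : 0 ≤ u) (hle : u ≤ A ^ (1 - β) * r ^ (α * (1 - β))) :
    0 ≤ u ^ (1 / (1 - β)) * r ^ (-α) / A ∧ u ^ (1 / (1 - β)) * r ^ (-α) / A ≤ 1 := by
  have h1β : 1 - β ≠ 0 := sub_ne_zero.2 hβ.ne'
  have hmono : u ^ (1 / (1 - β)) ≤ A * r ^ α :=
    calc u ^ (1 / (1 - β)) ≤ (A ^ (1 - β) * r ^ (α * (1 - β))) ^ (1 / (1 - β)) :=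
          rpow_le_rpow hu hle (one_div_nonneg.2 (sub_nonneg.2 hβ.le))
      _ = A * r ^ α := by
          rw [mul_rpow (by positivity) (by positivity), ← rpow_mul hA.le, ← rpow_mul hr.le,
            mul_one_div_cancel h1β, mul_assoc, mul_one_div_cancel h1β, mul_one, rpow_one]
  refine ⟨by positivity, (div_le_one hA).2 ?_⟩
  calc u ^ (1 / (1 - β)) * r ^ (-α) ≤ A * r ^ α * r ^ (-α) := by gcongr
    _ = A := by rw [mul_assoc, ← rpow_add hr, add_neg_cancel, rpow_zero, mul_one]

lemma abs_mul_rpow_mul_add_le {κ X e f a b : ℝ} (hX0 : 0 ≤ X) (hX1 : X ≤ 1) (he : 0 ≤ e)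
    (hf : 0 ≤ f) : |κ * X ^ e * (a + b * X ^ f)| ≤ |κ| * (|a| + |b|) := by
  have hXe : X ^ e ≤ 1 := rpow_le_one hX0 hX1 he
  have hXf : X ^ f ≤ 1 := rpow_le_one hX0 hX1 hf
  have hB : |a + b * X ^ f| ≤ |a| + |b| :=
    calc |a + b * X ^ f| ≤ |a| + |b| * X ^ f := by
          simpa [abs_mul, abs_of_nonneg (rpow_nonneg hX0 f)] using abs_add_le a (b * X ^ f)
      _ ≤ |a| + |b| := by gcongr; exact mul_le_of_le_one_right (abs_nonneg b) hXf
  rw [abs_mul, abs_mul, abs_of_nonneg (rpow_nonneg hX0 e), mul_assoc]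
  gcongr
  calc X ^ e * |a + b * X ^ f| ≤ 1 * (|a| + |b|) := by gcongr
    _ = |a| + |b| := one_mul _

lemma exists_pos_abs_mul_rpow_mul_lt (κ B : ℝ) {θ δ : ℝ} (hθ : 0 < θ) (hδ : 0 < δ) :
    ∃ w > 0, ∀ r, 0 < r → r < w → |κ * r ^ θ| * B < δ := by
  have hlim : Tendsto (fun r : ℝ => |κ * r ^ θ| * B) (𝓝 0) (𝓝 0) := by
    have h := ((continuousAt_rpow_const 0 θ (Or.inr hθ.le)).const_mul κ).abs.mul_const B
    simpa [zero_rpow hθ.ne'] using h.tendsto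
  obtain ⟨w, hw, hsmall⟩ := Metric.eventually_nhds_iff.1 (hlim.eventually (gt_mem_nhds hδ))
  exact ⟨w, hw, fun r hr hrw => hsmall (by rwa [Real.dist_eq, sub_zero, abs_of_pos hr])⟩

theorem stmt18_general (m p β b C α ε : ℝ) (hm : 0 < m) (hp : 0 < p) (hmp : 1 < m * p)
    (hβ1 : β < 1) (hb : 0 < b) (hC : 0 < C)
    (hα : (1 + p) / (m * p - β) < α) (hε0 : 0 < ε) (hε1 : ε < 1) :
    let g : ℝ → ℝ → ℝ := fun x t =>
      (pp ((C + ε) ^ (1 - β) * (pp (-x)) ^ (α * (1 - β)) -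
        b * (1 - β) * (1 - ε) * t)) ^ (1 / (1 - β))
    let l : ℝ := (C + ε) ^ (-(1 / α)) * (b * (1 - β) * (1 - ε)) ^ (1 / (α * (1 - β)))
    let S : ℝ → ℝ → ℝ := fun x t =>
      -(b⁻¹) * (α * m) ^ p * (C + ε) ^ (m * p - β) *
        (-x) ^ (α * (m * p - β) - (1 + p)) *
        (g x t * (-x) ^ (-α) / (C + ε)) ^ (p * (m + β) - (1 + p)) *
        (α * p * (m + β - 1) +
          p * (α * (1 - β) - 1) * (g x t * (-x) ^ (-α) / (C + ε)) ^ (1 - β))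
    (∀ x t : ℝ, 0 < t → x < -l * t ^ (1 / (α * (1 - β))) →
      deriv (fun τ => g x τ) t -
        deriv (fun y => |deriv (fun z => (g z t) ^ m) y| ^ (p - 1) *
          deriv (fun z => (g z t) ^ m) y) x + b * (g x t) ^ β =
      b * (g x t) ^ β * (ε + S x t)) ∧
    (1 + p ≤ p * (m + β) → ∀ δ : ℝ, 0 < δ → ∃ x₀ : ℝ, x₀ < 0 ∧
      ∀ x t : ℝ, x₀ < x → x < 0 → 0 < t → x < -l * t ^ (1 / (α * (1 - β))) →
        |S x t| < δ) := by
  intro g l S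
  have hA : 0 < C + ε := by linarith
  have h1β : 0 < 1 - β := sub_pos.2 hβ1
  have hmpβ : 0 < m * p - β := by linarith
  have hα0 : 0 < α := (div_pos (by linarith) hmpβ).trans hα
  have hθ : 0 < α * (m * p - β) - (1 + p) := by rw [div_lt_iff₀ hmpβ] at hα; linarith
  have hk : 0 < b * (1 - β) * (1 - ε) := by have := sub_pos.2 hε1; positivity
  have hc : 0 < (C + ε) ^ (1 - β) := rpow_pos_of_pos hA _
  have hs : 0 < α * (1 - β) := mul_pos hα0 h1β
  have hregion := fun x t (ht : 0 < t) (hx : x < -l * t ^ (1 / (α * (1 - β)))) =>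
    base_pos_of_lt_interface hc hs (by positivity) (interface_coeff_rpow hα0 hβ1 hA hk) ht hx
  refine ⟨fun x t ht hx => ?_, fun hq δ hδ => ?_⟩
  · obtain ⟨hx0, hu⟩ := hregion x t ht hx
    rw [(hasDerivAt_barrier_time hx0 hu).deriv, deriv_flux p hc hs (by positivity) hx0 hu]
    simp only [S, g]
    rw [barrier_eq hx0 hu]
    linear_combination time_residual (b := b) (ε := ε) hβ1 hu rfl rfl +
      flux_residual (p := p) hβ1 hα0 hm hb.ne' hA (neg_pos.2 hx0) hu rfl rfl rfl
  · obtain ⟨w, hw, hsmall⟩ := exists_pos_abs_mul_rpow_mul_lt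
      (-(b⁻¹) * (α * m) ^ p * (C + ε) ^ (m * p - β))
      (|α * p * (m + β - 1)| + |p * (α * (1 - β) - 1)|) hθ hδ
    refine ⟨-w, by linarith, fun x t hxw _ ht hx => ?_⟩
    obtain ⟨hx0, hu⟩ := hregion x t ht hx
    obtain ⟨hX0, hX1⟩ :=
      barrier_ratio_mem_Icc hβ1 hA (neg_pos.2 hx0) hu.le (sub_le_self _ (mul_pos hk ht).le)
    simp only [S, g]
    rw [barrier_eq hx0 hu]
    exact (abs_mul_rpow_mul_add_le hX0 hX1 (by linarith) h1β.le).trans_lt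
      (hsmall (-x) (neg_pos.2 hx0) (by linarith))

/-- the residual identity `Lg_ε = b g_ε^β (ε + S)` for the
barrier `g_ε(x,t) = [(C+ε)^{1-β}(-x)_+^{α(1-β)} - b(1-β)(1-ε)t]_+^{1/(1-β)}`
on the region `x < η_{ℓ(ε)}(t)`, together with the uniform smallness of `S`
near the interface (when `p(m+β) ≥ 1+p`). -/
theorem stmt18 (m p β b C α ε : ℝ) (hm : 0 < m) (hp : 0 < p) (hmp : 1 < m * p)
    (hβ0 : 0 < β) (hβ1 : β < 1) (hb : 0 < b) (hC : 0 < C)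
    (hα : (1 + p) / (m * p - β) < α) (hε0 : 0 < ε) (hε1 : ε < 1) :
    let g : ℝ → ℝ → ℝ := fun x t =>
      (pp ((C + ε) ^ (1 - β) * (pp (-x)) ^ (α * (1 - β)) -
        b * (1 - β) * (1 - ε) * t)) ^ (1 / (1 - β))
    let l : ℝ := (C + ε) ^ (-(1 / α)) * (b * (1 - β) * (1 - ε)) ^ (1 / (α * (1 - β)))
    let S : ℝ → ℝ → ℝ := fun x t =>
      -(b⁻¹) * (α * m) ^ p * (C + ε) ^ (m * p - β) *
        (-x) ^ (α * (m * p - β) - (1 + p)) *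
        (g x t * (-x) ^ (-α) / (C + ε)) ^ (p * (m + β) - (1 + p)) *
        (α * p * (m + β - 1) +
          p * (α * (1 - β) - 1) * (g x t * (-x) ^ (-α) / (C + ε)) ^ (1 - β))
    (∀ x t : ℝ, 0 < t → x < -l * t ^ (1 / (α * (1 - β))) →
      deriv (fun τ => g x τ) t -
        deriv (fun y => |deriv (fun z => (g z t) ^ m) y| ^ (p - 1) *
          deriv (fun z => (g z t) ^ m) y) x + b * (g x t) ^ β =
      b * (g x t) ^ β * (ε + S x t)) ∧
    (1 + p ≤ p * (m + β) → ∀ δ : ℝ, 0 < δ → ∃ x₀ : ℝ, x₀ < 0 ∧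
      ∀ x t : ℝ, x₀ < x → x < 0 → 0 < t → x < -l * t ^ (1 / (α * (1 - β))) →
        |S x t| < δ) :=
  stmt18_general m p β b C α ε hm hp hmp hβ1 hb hC hα hε0 hε1
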